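/- For all integers 0 ≤ k ≤ j, the following identity holds in ℚ(q, a): ∑_{h=k}^{j} (−q)^h a^h q^{h² − 2jh} [h; k]_+ [j; h]_+ = (−q)^k a^k q^{k² − 2jk} (a q^{2+2k−2j}; q²)_{j−k} [j; k]_+. (This is the product form of the rescaled top twist rule applied to the basis web RI[j,k].) -/

import Mathlib

/-!
Put `h = k + i`. Trinomial revision `[h;k]₊ [j;h]₊ = [j;k]₊ [j-k;i]₊` and the factorisation of the
monomial at `k + i` through the monomial at `k` turn the sum into
`(-q)^k a^k q^(k²-2jk) [j;k]₊ · ∑ᵢ (-x)ⁱ (q²)^C(i,2) [j-k;i]₊` with `x = a q^(2+2k-2j)`, and by the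
q-binomial theorem of Gauss (induction on `j - k` via the q-Pascal rule) the last sum is
`(x;q²)_{j-k}`.
-/

noncomputable section

open Finset

/-- The field `ℚ(q, a)` of rational functions in two variables. -/
abbrev F : Type := FractionRing (MvPolynomial (Fin 2) ℚ)

/-- The variable `q`. -/
def q : F := algebraMap (MvPolynomial (Fin 2) ℚ) F (MvPolynomial.X 0)

/-- The variable `a`. -/
def a : F := algebraMap (MvPolynomial (Fin 2) ℚ) F (MvPolynomial.X 1)

/-- The q-Pochhammer symbol `(x; y)_n = ∏_{j=0}^{n-1} (1 - x yʲ)`. -/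
def qPoch (x y : F) (n : ℕ) : F := ∏ i ∈ Finset.range n, (1 - x * y ^ i)

/-- `(q²;q²)_m = ∏_{i=1}^{m} (1 - q^{2i})`. -/
def qp (m : ℕ) : F := qPoch (q ^ 2) (q ^ 2) m

/-- The positive quantum binomial coefficient `[N; k]₊`. -/
def qbin (N k : ℕ) : F := qp N / (qp k * qp (N - k))

theorem two_mul_choose_two_add_self (n : ℕ) : 2 * n.choose 2 + n = n * n := by
  induction n with
  | zero => rfl
  | succ n ih => rw [Nat.choose_succ_succ', Nat.choose_one_right]; nlinarith

theorem neg_pow_mul_pow_mul_zpow_add {K : Type*} [Field K] {t : K} (ht : t ≠ 0) (b : K)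
    (j k i : ℕ) :
    (-t) ^ (k + i) * b ^ (k + i) * t ^ (((k + i : ℕ) : ℤ) ^ 2 - 2 * (j : ℤ) * ((k + i : ℕ) : ℤ)) =
      (-t) ^ k * b ^ k * t ^ ((k : ℤ) ^ 2 - 2 * (j : ℤ) * (k : ℤ)) *
        ((-(b * t ^ (2 + 2 * (k : ℤ) - 2 * (j : ℤ)))) ^ i * (t ^ 2) ^ i.choose 2) := by
  have hexp : t ^ i * t ^ (((k + i : ℕ) : ℤ) ^ 2 - 2 * (j : ℤ) * ((k + i : ℕ) : ℤ)) =
      t ^ ((k : ℤ) ^ 2 - 2 * (j : ℤ) * (k : ℤ)) * (t ^ (2 + 2 * (k : ℤ) - 2 * (j : ℤ))) ^ i *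
        (t ^ 2) ^ i.choose 2 := by
    simp only [← zpow_natCast, ← zpow_mul, ← zpow_add₀ ht]
    congr 1
    have := congrArg (Nat.cast : ℕ → ℤ) (two_mul_choose_two_add_self i)
    push_cast at this ⊢
    linear_combination -this
  rw [neg_pow, neg_pow t, neg_pow (b * _), mul_pow]
  linear_combination (-1) ^ (k + i) * t ^ k * b ^ (k + i) * hexp

theorem q_ne_zero : q ≠ 0 := by
  rw [q, Ne, map_eq_zero_iff _ (IsFractionRing.injective _ F)]
  exact MvPolynomial.X_ne_zero 0

theorem q_pow_ne_one {n : ℕ} (hn : n ≠ 0) : q ^ n ≠ 1 := by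
  rw [q, ← map_pow, Ne, ← map_one (algebraMap (MvPolynomial (Fin 2) ℚ) F),
    (IsFractionRing.injective _ F).eq_iff]
  intro h
  simpa [hn] using congrArg (MvPolynomial.eval fun _ => (0 : ℚ)) h

theorem one_sub_q_sq_pow_succ_ne_zero (n : ℕ) : 1 - (q ^ 2) ^ (n + 1) ≠ 0 := by
  rw [← pow_mul]
  exact sub_ne_zero.2 (q_pow_ne_one (by lia)).symm

theorem qPoch_succ (x y : F) (n : ℕ) : qPoch x y (n + 1) = qPoch x y n * (1 - x * y ^ n) :=
  prod_range_succ _ n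

theorem qp_succ (m : ℕ) : qp (m + 1) = qp m * (1 - (q ^ 2) ^ (m + 1)) := by
  rw [qp, qp, qPoch_succ, ← pow_succ']

theorem qp_zero : qp 0 = 1 :=
  prod_range_zero fun i => 1 - q ^ 2 * (q ^ 2) ^ i

theorem qp_ne_zero (m : ℕ) : qp m ≠ 0 := by
  induction m with
  | zero => simp [qp_zero]
  | succ m ih =>
    rw [qp_succ]
    exact mul_ne_zero ih (one_sub_q_sq_pow_succ_ne_zero m)

theorem qbin_zero_right (N : ℕ) : qbin N 0 = 1 := by
  simp [qbin, qp_zero, qp_ne_zero]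

theorem qbin_self (N : ℕ) : qbin N N = 1 := by
  simp [qbin, qp_zero, qp_ne_zero]

theorem qbin_succ_succ {m i : ℕ} (h : i < m) :
    qbin (m + 1) (i + 1) = qbin m (i + 1) + (q ^ 2) ^ (m - i) * qbin m i := by
  obtain ⟨d, rfl⟩ : ∃ d, m = i + d + 1 := ⟨m - i - 1, by lia⟩
  rw [qbin, qbin, qbin, show i + d + 1 + 1 - (i + 1) = d + 1 by lia,
    show i + d + 1 - (i + 1) = d by lia, show i + d + 1 - i = d + 1 by lia,
    qp_succ, qp_succ d, qp_succ i]
  have := qp_ne_zero (i + d + 1)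
  have := qp_ne_zero d
  have := qp_ne_zero i
  have := one_sub_q_sq_pow_succ_ne_zero d
  have := one_sub_q_sq_pow_succ_ne_zero i
  field_simp
  ring

theorem qbin_mul_qbin {k h j : ℕ} (hkh : k ≤ h) (hhj : h ≤ j) :
    qbin h k * qbin j h = qbin j k * qbin (j - k) (h - k) := by
  have := qp_ne_zero k
  have := qp_ne_zero (h - k)
  have := qp_ne_zero (j - h)
  have := qp_ne_zero h
  have := qp_ne_zero (j - k)
  rw [qbin, qbin, qbin, qbin, show j - k - (h - k) = j - h by lia]
  field_simp

theorem qPoch_eq_sum_qbin (x : F) (m : ℕ) :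
    qPoch x (q ^ 2) m = ∑ i ∈ range (m + 1), (-x) ^ i * (q ^ 2) ^ i.choose 2 * qbin m i := by
  obtain ⟨t, ht⟩ : ∃ t : ℕ → ℕ → F, ∀ N i, t N i = (-x) ^ i * (q ^ 2) ^ i.choose 2 * qbin N i :=
    ⟨_, fun _ _ => rfl⟩
  simp only [← ht]
  induction m with
  | zero => simp [qPoch, ht, qbin_self]
  | succ n ih =>
    have step : ∀ i ∈ range n, t (n + 1) (i + 1) = t n (i + 1) - x * (q ^ 2) ^ n * t n i := by
      intro i hi
      have hin : i < n := mem_range.1 hi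
      rw [ht, ht, ht, qbin_succ_succ hin, Nat.choose_succ_succ', Nat.choose_one_right]
      -- `(q²)^C(i+1,2) · (q²)^(n-i) = (q²)^C(i,2) · (q²)^n`
      obtain ⟨d, rfl⟩ : ∃ d, n = i + d := ⟨n - i, by lia⟩
      rw [Nat.add_sub_cancel_left]
      ring
    have top : t (n + 1) (n + 1) = -(x * (q ^ 2) ^ n * t n n) := by
      rw [ht, ht, qbin_self, qbin_self, Nat.choose_succ_succ', Nat.choose_one_right]
      ring
    have bottom : t (n + 1) 0 = t n 0 := by rw [ht, ht, qbin_zero_right, qbin_zero_right]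
    rw [qPoch_succ, ih, sum_range_succ' (t (n + 1)), sum_range_succ (fun i => t (n + 1) (i + 1)),
      sum_congr rfl step, top, bottom, sum_sub_distrib, ← mul_sum, mul_sub, mul_one]
    nth_rw 1 [sum_range_succ' (t n)]
    rw [sum_range_succ (t n)]
    ring

/-- Product form of the rescaled top twist rule on `RI[j,k]`:
`∑_{h=k}^{j} (−q)^h a^h q^{h²−2jh} [h;k]₊ [j;h]₊
 = (−q)^k a^k q^{k²−2jk} (a q^{2+2k−2j};q²)_{j−k} [j;k]₊`. -/
theorem product_form_T_RI (j k : ℕ) (hk : k ≤ j) :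
    ∑ h ∈ Finset.Icc k j,
      (-q) ^ h * a ^ h * q ^ ((h : ℤ) ^ 2 - 2 * (j : ℤ) * (h : ℤ)) * qbin h k * qbin j h =
      (-q) ^ k * a ^ k * q ^ ((k : ℤ) ^ 2 - 2 * (j : ℤ) * (k : ℤ)) *
        qPoch (a * q ^ (2 + 2 * (k : ℤ) - 2 * (j : ℤ))) (q ^ 2) (j - k) * qbin j k := by
  rw [← Ico_add_one_right_eq_Icc, sum_Ico_eq_sum_range, show j + 1 - k = j - k + 1 by lia,
    qPoch_eq_sum_qbin, mul_sum, sum_mul]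
  refine sum_congr rfl fun i hi => ?_
  have hij : k + i ≤ j := by rw [mem_range] at hi; lia
  rw [mul_assoc, qbin_mul_qbin (Nat.le_add_right k i) hij, Nat.add_sub_cancel_left,
    neg_pow_mul_pow_mul_zpow_add q_ne_zero]
  ring
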